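/- The hyperbolic (pullback-limit) solution solves the controlled linear equation: if ξ : ℝ → E is continuous with ‖ξ s‖ ≤ 1 for all s, then the function x_ξ defined by x_ξ t = ρ • ∫ s in Set.Iic t, Ψ t s (ξ s) (which converges absolutely by exponential stability) satisfies HasDerivAt x_ξ (L t (x_ξ t) + ρ • ξ t) t for every t ∈ ℝ; moreover ‖x_ξ t‖ ≤ ρ * K / γ for all t, so x_ξ is the bounded solution of x' = L(t)x + ρξ(t) on the whole real line. -/

import Mathlib

open MeasureTheory Set Metric Pointwise
open scoped RealInnerProductSpace

noncomputable section

abbrev Euc (d : ℕ) : Type := EuclideanSpace ℝ (Fin d)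

/-- The set of admissible controls: measurable functions with values in the closed unit ball. -/
def ctrlSet (d : ℕ) : Set (ℝ → Euc d) :=
  {ξ | Measurable ξ ∧ ∀ s, ‖ξ s‖ ≤ 1}

/-- The attractor fibre at time `t`. -/
def Afib (d : ℕ) (Ψ : ℝ → ℝ → (Euc d →L[ℝ] Euc d)) (ρ t : ℝ) : Set (Euc d) :=
  {x | ∃ ξ ∈ ctrlSet d, x = ρ • ∫ s in Set.Iic t, Ψ t s (ξ s)}

/-- The reachable-set operator of the linear differential inclusion. -/
def reach (d : ℕ) (Ψ : ℝ → ℝ → (Euc d →L[ℝ] Euc d)) (ρ t t₀ : ℝ) (S : Set (Euc d)) :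
    Set (Euc d) :=
  {y | ∃ x₀ ∈ S, ∃ ξ ∈ ctrlSet d, y = Ψ t t₀ x₀ + ρ • ∫ s in Set.Icc t₀ t, Ψ t s (ξ s)}

/-! By the cocycle property, `∫ s in Iic τ, Ψ τ s (ξ s) = Ψ τ 0 (g τ)` with
`g τ = ∫ s in Iic τ, Ψ 0 s (ξ s)`, so only one operator moves with `τ`. The fundamental theorem of
calculus gives `g' t = Ψ 0 t (ξ t)`, and a product rule that needs only norm continuity of
`τ ↦ Ψ τ 0` together with the derivative of `τ ↦ Ψ τ 0 v` for the fixed vector `v = g t` gives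
`x' = L x + ρ ξ`. The bound is `∫ s in Iic t, K * exp (-γ * (t - s)) = K / γ`. -/

theorem exp_neg_mul_sub (γ t s : ℝ) :
    Real.exp (-γ * (t - s)) = Real.exp (γ * s) * Real.exp (-γ * t) := by
  rw [← Real.exp_add]; ring_nf

theorem integrableOn_exp_neg_mul_sub_Iic {γ : ℝ} (hγ : 0 < γ) (t : ℝ) :
    IntegrableOn (fun s => Real.exp (-γ * (t - s))) (Iic t) := by
  simp only [exp_neg_mul_sub γ t]
  exact (integrableOn_exp_mul_Iic hγ t).mul_const _

theorem integral_exp_neg_mul_sub_Iic {γ : ℝ} (hγ : 0 < γ) (t : ℝ) :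
    ∫ s in Iic t, Real.exp (-γ * (t - s)) = γ⁻¹ := by
  simp only [exp_neg_mul_sub γ t]
  rw [integral_mul_const, integral_exp_mul_Iic hγ, div_mul_eq_mul_div, ← Real.exp_add]
  simp

theorem hasDerivAt_integral_Iic {E : Type*} [NormedAddCommGroup E] [NormedSpace ℝ E]
    [CompleteSpace E] {f : ℝ → E} (hf : Continuous f) (hint : ∀ b, IntegrableOn f (Iic b)) (t : ℝ) :
    HasDerivAt (fun τ => ∫ s in Iic τ, f s) (f t) t := by
  have hsplit : (fun τ => ∫ s in Iic τ, f s)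
      = fun τ => (∫ s in Iic 0, f s) + ∫ s in (0 : ℝ)..τ, f s := by
    ext τ
    rw [← intervalIntegral.integral_Iic_sub_Iic (hint 0) (hint τ), add_sub_cancel]
  rw [hsplit]
  exact ((hf.integral_hasStrictDerivAt 0 t).hasDerivAt).const_add _

theorem ContinuousAt.hasDerivAt_clm_apply {𝕜 E F : Type*} [NontriviallyNormedField 𝕜]
    [NormedAddCommGroup E] [NormedSpace 𝕜 E] [NormedAddCommGroup F] [NormedSpace 𝕜 F]
    {A : 𝕜 → E →L[𝕜] F} {g : 𝕜 → E} {g' : E} {w : F} {t : 𝕜} (hA : ContinuousAt A t)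
    (hAg : HasDerivAt (fun τ => A τ (g t)) w t) (hg : HasDerivAt g g' t) :
    HasDerivAt (fun τ => A τ (g τ)) (w + A t g') t := by
  have hincr : HasDerivAt (fun τ => A τ (g τ - g t)) (A t g') t := by
    rw [hasDerivAt_iff_tendsto_slope]
    have hslope : slope (fun τ => A τ (g τ - g t)) t = fun τ => A τ (slope g t τ) := by
      ext τ
      simp [slope_def_module]
    rw [hslope]
    exact (isBoundedBilinearMap_apply.continuous.tendsto (A t, g')).comp
      ((hA.mono_left nhdsWithin_le_nhds).prodMk_nhds (hasDerivAt_iff_tendsto_slope.mp hg))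
  convert hAg.add hincr using 1
  ext τ
  simp

section EvolutionFamily

variable {E : Type*} [NormedAddCommGroup E] [NormedSpace ℝ E] {Ψ : ℝ → ℝ → E →L[ℝ] E} {K γ : ℝ}
  {ξ : ℝ → E}

theorem norm_evolution_apply_le (hstab : ∀ s t : ℝ, s ≤ t → ‖Ψ t s‖ ≤ K * Real.exp (-γ * (t - s)))
    (hξb : ∀ s, ‖ξ s‖ ≤ 1) {s t : ℝ} (hst : s ≤ t) :
    ‖Ψ t s (ξ s)‖ ≤ K * Real.exp (-γ * (t - s)) :=
  calc ‖Ψ t s (ξ s)‖ ≤ ‖Ψ t s‖ * ‖ξ s‖ := (Ψ t s).le_opNorm _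
    _ ≤ ‖Ψ t s‖ := mul_le_of_le_one_right (norm_nonneg _) (hξb s)
    _ ≤ K * Real.exp (-γ * (t - s)) := hstab s t hst

theorem integrableOn_evolution_Iic (hγ : 0 < γ)
    (hstab : ∀ s t : ℝ, s ≤ t → ‖Ψ t s‖ ≤ K * Real.exp (-γ * (t - s)))
    (hξb : ∀ s, ‖ξ s‖ ≤ 1) {t : ℝ}
    (hmeas : AEStronglyMeasurable (fun s => Ψ t s (ξ s)) (volume.restrict (Iic t))) :
    IntegrableOn (fun s => Ψ t s (ξ s)) (Iic t) := by
  refine ((integrableOn_exp_neg_mul_sub_Iic hγ t).const_mul K).mono' hmeas ?_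
  filter_upwards [ae_restrict_mem measurableSet_Iic] with s hs
  exact norm_evolution_apply_le hstab hξb hs

theorem norm_integral_evolution_Iic_le (hγ : 0 < γ)
    (hstab : ∀ s t : ℝ, s ≤ t → ‖Ψ t s‖ ≤ K * Real.exp (-γ * (t - s)))
    (hξb : ∀ s, ‖ξ s‖ ≤ 1) (t : ℝ) :
    ‖∫ s in Iic t, Ψ t s (ξ s)‖ ≤ K / γ := by
  calc ‖∫ s in Iic t, Ψ t s (ξ s)‖ ≤ ∫ s in Iic t, K * Real.exp (-γ * (t - s)) := by
        refine norm_integral_le_of_norm_le ((integrableOn_exp_neg_mul_sub_Iic hγ t).const_mul K) ?_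
        filter_upwards [ae_restrict_mem measurableSet_Iic] with s hs
        exact norm_evolution_apply_le hstab hξb hs
    _ = K / γ := by rw [integral_const_mul, integral_exp_neg_mul_sub_Iic hγ, div_eq_mul_inv]

theorem integrableOn_evolution_Iic_of_cocycle (hγ : 0 < γ)
    (hstab : ∀ s t : ℝ, s ≤ t → ‖Ψ t s‖ ≤ K * Real.exp (-γ * (t - s)))
    (hΨcoc : ∀ t s r : ℝ, (Ψ t s).comp (Ψ s r) = Ψ t r) (hξb : ∀ s, ‖ξ s‖ ≤ 1) {t : ℝ}
    (hmeas : AEStronglyMeasurable (fun s => Ψ t s (ξ s)) (volume.restrict (Iic t))) (r : ℝ) :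
    IntegrableOn (fun s => Ψ r s (ξ s)) (Iic t) := by
  have hfactor : (fun s => Ψ r s (ξ s)) = fun s => Ψ r t (Ψ t s (ξ s)) := by
    ext s; rw [← hΨcoc r t s, ContinuousLinearMap.comp_apply]
  rw [hfactor]
  exact (Ψ r t).integrable_comp (integrableOn_evolution_Iic hγ hstab hξb hmeas)

theorem integral_evolution_Iic_eq [CompleteSpace E]
    (hΨcoc : ∀ t s r : ℝ, (Ψ t s).comp (Ψ s r) = Ψ t r) {r t : ℝ}
    (hint : IntegrableOn (fun s => Ψ r s (ξ s)) (Iic t)) :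
    ∫ s in Iic t, Ψ t s (ξ s) = Ψ t r (∫ s in Iic t, Ψ r s (ξ s)) := by
  have hfactor : (fun s => Ψ t s (ξ s)) = fun s => Ψ t r (Ψ r s (ξ s)) := by
    ext s; rw [← hΨcoc t r s, ContinuousLinearMap.comp_apply]
  rw [hfactor, (Ψ t r).integral_comp_comm hint]

end EvolutionFamily

theorem hyperbolic_solution_solves_general
    (d : ℕ)
    (L : ℝ → (Euc d →L[ℝ] Euc d))
    (Ψ : ℝ → ℝ → (Euc d →L[ℝ] Euc d))
    (hΨc : Continuous fun p : ℝ × ℝ => Ψ p.1 p.2)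
    (hΨid : ∀ t : ℝ, Ψ t t = ContinuousLinearMap.id ℝ (Euc d))
    (hΨcoc : ∀ t s r : ℝ, (Ψ t s).comp (Ψ s r) = Ψ t r)
    (hΨd : ∀ (s : ℝ) (x : Euc d) (t : ℝ), HasDerivAt (fun τ => Ψ τ s x) (L t (Ψ t s x)) t)
    (K γ : ℝ) (hγ : 0 < γ)
    (hstab : ∀ s t : ℝ, s ≤ t → ‖Ψ t s‖ ≤ K * Real.exp (-γ * (t - s)))
    (ρ : ℝ) (hρ : 0 < ρ)
    (ξ : ℝ → Euc d) (hξc : Continuous ξ) (hξb : ∀ s : ℝ, ‖ξ s‖ ≤ 1) :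
    (∀ t : ℝ, HasDerivAt (fun τ => ρ • ∫ s in Set.Iic τ, Ψ τ s (ξ s))
      (L t (ρ • ∫ s in Set.Iic t, Ψ t s (ξ s)) + ρ • ξ t) t) ∧
    (∀ t : ℝ, ‖ρ • ∫ s in Set.Iic t, Ψ t s (ξ s)‖ ≤ ρ * K / γ) := by
  have hcont (a : ℝ) : Continuous fun s => Ψ a s (ξ s) :=
    (hΨc.comp (continuous_const.prodMk continuous_id)).clm_apply hξc
  have hint (t r : ℝ) : IntegrableOn (fun s => Ψ r s (ξ s)) (Iic t) :=
    integrableOn_evolution_Iic_of_cocycle hγ hstab hΨcoc hξb (hcont t).aestronglyMeasurable r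
  have hpull : (fun τ => ρ • ∫ s in Iic τ, Ψ τ s (ξ s))
      = fun τ => ρ • Ψ τ 0 (∫ s in Iic τ, Ψ 0 s (ξ s)) := by
    ext τ; rw [integral_evolution_Iic_eq hΨcoc (hint τ 0)]
  refine ⟨fun t => ?_, fun t => ?_⟩
  · have hΨξ : Ψ t 0 (Ψ 0 t (ξ t)) = ξ t := by
      rw [← ContinuousLinearMap.comp_apply, hΨcoc, hΨid, ContinuousLinearMap.id_apply]
    have hΨ0 : ContinuousAt (fun τ => Ψ τ 0) t :=
      (hΨc.comp (continuous_id.prodMk continuous_const)).continuousAt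
    have hderiv := (hΨ0.hasDerivAt_clm_apply (hΨd 0 _ t)
      (hasDerivAt_integral_Iic (hcont 0) (fun b => hint b 0) t)).const_smul ρ
    rw [hpull, integral_evolution_Iic_eq hΨcoc (hint t 0)]
    refine hderiv.congr_deriv ?_
    rw [hΨξ, smul_add, map_smul]
  · rw [norm_smul, Real.norm_eq_abs, abs_of_pos hρ, mul_div_assoc]
    exact mul_le_mul_of_nonneg_left (norm_integral_evolution_Iic_le hγ hstab hξb t) hρ.le

/-- The hyperbolic (pullback-limit) solution solves the controlled linear equation and
is bounded on the whole real line. -/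
theorem hyperbolic_solution_solves
    (d : ℕ) (hd : 1 ≤ d)
    (L : ℝ → (Euc d →L[ℝ] Euc d)) (hL : Continuous L)
    (Ψ : ℝ → ℝ → (Euc d →L[ℝ] Euc d))
    (hΨc : Continuous fun p : ℝ × ℝ => Ψ p.1 p.2)
    (hΨid : ∀ t : ℝ, Ψ t t = ContinuousLinearMap.id ℝ (Euc d))
    (hΨcoc : ∀ t s r : ℝ, (Ψ t s).comp (Ψ s r) = Ψ t r)
    (hΨd : ∀ (s : ℝ) (x : Euc d) (t : ℝ), HasDerivAt (fun τ => Ψ τ s x) (L t (Ψ t s x)) t)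
    (K γ : ℝ) (hK : 1 ≤ K) (hγ : 0 < γ)
    (hstab : ∀ s t : ℝ, s ≤ t → ‖Ψ t s‖ ≤ K * Real.exp (-γ * (t - s)))
    (ρ : ℝ) (hρ : 0 < ρ)
    (ξ : ℝ → Euc d) (hξc : Continuous ξ) (hξb : ∀ s : ℝ, ‖ξ s‖ ≤ 1) :
    (∀ t : ℝ, HasDerivAt (fun τ => ρ • ∫ s in Set.Iic τ, Ψ τ s (ξ s))
      (L t (ρ • ∫ s in Set.Iic t, Ψ t s (ξ s)) + ρ • ξ t) t) ∧
    (∀ t : ℝ, ‖ρ • ∫ s in Set.Iic t, Ψ t s (ξ s)‖ ≤ ρ * K / γ) :=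
  hyperbolic_solution_solves_general d L Ψ hΨc hΨid hΨcoc hΨd K γ hγ hstab ρ hρ ξ hξc hξb
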